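/- The graded dimension of the vacuum module of the A1, ℓ=4 lattice vertex algebra equals the Neveu–Schwarz symplectic fermion character: Σ_{k ∈ 4ℤ} t^{(1/8)(k²−2k)+1/8} / ∏_{m≥1}(1−t^m) = ∏_{m≥1}(1+t^m)², as formal power series. -/

import Mathlib

/-!
Put `k = 4n`: the numerator becomes `∑_{n ∈ ℤ} t^(2n² - n)`, which is the Jacobi triple
product `∑ s^(k²) z^k = ∏ (1 - s^(2n+2)) (1 + z s^(2n+1)) (1 + z⁻¹ s^(2n+1))` at `s = t²`,
`z = t⁻¹`.

The triple product is the `N → ∞` limit of its finite form, which is Gauss's q-binomial theorem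
for `∏_{i<2N} (1 + x q^i)` at `q = s²`, `x = z s^(1-2N)`. The coefficients `[2N, N+k]_q` tend to
`1 / (q; q)_∞` and are bounded by it, so Tannery's theorem passes to the limit.

Finally, Euler's splittings `(-t; t)_∞ = (-t; t²)_∞ (-t²; t²)_∞` and
`(-a; q)_∞ (a; q)_∞ = (a²; q²)_∞` turn the product into `(-t; t)_∞² (t; t)_∞`.
-/

open Finset Filter Topology

section QBinomial

variable {R : Type*} [CommRing R]

def qBinom (q : R) : ℕ → ℕ → R
  | _, 0 => 1
  | 0, _ + 1 => 0
  | n + 1, m + 1 => qBinom q n m + q ^ (m + 1) * qBinom q n (m + 1)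

/-- `qPochhammer q n` is the q-Pochhammer symbol `(q; q)_n`. -/
def qPochhammer (q : R) (n : ℕ) : R := ∏ i ∈ range n, (1 - q ^ (i + 1))

variable (q : R)

@[simp] lemma qBinom_zero_right (n : ℕ) : qBinom q n 0 = 1 := by cases n <;> rfl

@[simp] lemma qBinom_zero_succ (m : ℕ) : qBinom q 0 (m + 1) = 0 := rfl

lemma qBinom_succ_succ (n m : ℕ) :
    qBinom q (n + 1) (m + 1) = qBinom q n m + q ^ (m + 1) * qBinom q n (m + 1) := rfl

lemma qBinom_eq_zero_of_lt {n m : ℕ} (h : n < m) : qBinom q n m = 0 := by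
  induction n generalizing m with
  | zero => obtain ⟨m, rfl⟩ := Nat.exists_eq_add_of_lt h; simp
  | succ n ih =>
    obtain ⟨m, rfl⟩ := Nat.exists_eq_add_of_lt (Nat.zero_lt_of_lt h)
    rw [qBinom_succ_succ, ih (by omega), ih (by omega), mul_zero, add_zero]

@[simp] lemma qBinom_self (n : ℕ) : qBinom q n n = 1 := by
  induction n with
  | zero => rfl
  | succ n ih => rw [qBinom_succ_succ, ih, qBinom_eq_zero_of_lt q n.lt_succ_self]; ring

lemma qPochhammer_succ (n : ℕ) :
    qPochhammer q (n + 1) = qPochhammer q n * (1 - q ^ (n + 1)) :=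
  prod_range_succ _ n

lemma qBinom_mul_qPochhammer_mul_qPochhammer (m k : ℕ) :
    qBinom q (m + k) m * qPochhammer q m * qPochhammer q k = qPochhammer q (m + k) := by
  induction m generalizing k with
  | zero => simp [qPochhammer]
  | succ m ihm =>
    induction k with
    | zero => simp [qPochhammer]
    | succ k ihk =>
      have h₁ := ihm (k + 1)
      rw [← add_assoc] at h₁
      rw [show m + 1 + k = m + k + 1 by ring] at ihk
      rw [show m + 1 + (k + 1) = m + k + 1 + 1 by ring, qBinom_succ_succ,
        qPochhammer_succ q (m + k + 1), qPochhammer_succ q m, qPochhammer_succ q k]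
      rw [qPochhammer_succ q m] at ihk
      rw [qPochhammer_succ q k] at h₁
      linear_combination (1 - q ^ (m + 1)) * h₁ + q ^ (m + 1) * (1 - q ^ (k + 1)) * ihk

theorem prod_one_add_mul_pow_eq_sum_qBinom (n : ℕ) (x : R) :
    ∏ i ∈ range n, (1 + x * q ^ i) =
      ∑ m ∈ range (n + 1), q ^ m.choose 2 * qBinom q n m * x ^ m := by
  induction n generalizing x with
  | zero => simp
  | succ n ih =>
    set a : ℕ → R := fun m => q ^ m.choose 2 * qBinom q n m * (x * q) ^ m with ha
    have ha_top : a (n + 1) = 0 := by simp [ha, qBinom_eq_zero_of_lt q n.lt_succ_self]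
    have hshift : ∑ m ∈ range (n + 1), a m = ∑ m ∈ range (n + 1), a (m + 1) + 1 := by
      rw [← add_zero (∑ m ∈ range (n + 1), a m), ← ha_top, ← sum_range_succ,
        sum_range_succ']
      simp [ha]
    calc ∏ i ∈ range (n + 1), (1 + x * q ^ i)
        = (∑ m ∈ range (n + 1), a m) * (1 + x) := by
          rw [prod_range_succ', ← ih, pow_zero, mul_one]
          exact congrArg (· * _) (prod_congr rfl fun i _ => by ring)
      _ = ∑ m ∈ range (n + 1), (a (m + 1) + a m * x) + 1 := by
          rw [mul_one_add, sum_mul, sum_add_distrib]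
          nth_rw 1 [hshift]
          ring
      _ = ∑ m ∈ range (n + 1 + 1), q ^ m.choose 2 * qBinom q (n + 1) m * x ^ m := by
          rw [sum_range_succ' (fun m => q ^ m.choose 2 * qBinom q (n + 1) m * x ^ m),
            qBinom_zero_right, Nat.choose_zero_succ, pow_zero, pow_zero, mul_one, mul_one]
          refine congrArg (· + 1) (sum_congr rfl fun m _ => ?_)
          simp only [ha, qBinom_succ_succ, Nat.choose_succ_succ', Nat.choose_one_right]
          ring

end QBinomial

section FiniteJacobi

variable {K : Type*} [Field K]

lemma two_mul_cast_choose_two (m : ℕ) : (2 * m.choose 2 : ℤ) = m ^ 2 - m := by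
  induction m with
  | zero => simp
  | succ m ih =>
    rw [Nat.choose_succ_succ', Nat.choose_one_right]; push_cast; linear_combination ih

lemma prod_range_pow_two_mul_add_one (s : K) (N : ℕ) :
    ∏ j ∈ range N, s ^ (2 * j + 1) = s ^ (N ^ 2) := by
  induction N with
  | zero => simp
  | succ N ih => rw [prod_range_succ, ih, ← pow_add]; ring_nf

lemma pow_sq_mul_prod_one_add_mul_zpow {s z : K} (hs : s ≠ 0) (hz : z ≠ 0) (N : ℕ) :
    s ^ (N ^ 2) * ∏ i ∈ range (2 * N), (1 + z * s ^ (2 * i + 1 - 2 * N : ℤ)) =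
      z ^ N * ∏ j ∈ range N, (1 + z * s ^ (2 * j + 1)) * (1 + z⁻¹ * s ^ (2 * j + 1)) := by
  rw [two_mul, prod_range_add, ← prod_range_reflect _ N, ← prod_range_pow_two_mul_add_one,
    ← mul_assoc, ← prod_mul_distrib, ← prod_mul_distrib, ← card_range N, ← prod_const,
    card_range, ← prod_mul_distrib]
  refine prod_congr rfl fun j hj => ?_
  have hj : j < N := mem_range.mp hj
  rw [show (2 * (N - 1 - j : ℕ) + 1 - 2 * N : ℤ) = -((2 * j + 1 : ℕ) : ℤ) by
      push_cast [Nat.cast_sub (by omega : j ≤ N - 1), Nat.cast_sub (by omega : 1 ≤ N)]; ring,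
    show (2 * (N + j : ℕ) + 1 - 2 * N : ℤ) = ((2 * j + 1 : ℕ) : ℤ) by push_cast; ring,
    zpow_neg, zpow_natCast]
  field_simp
  ring

theorem sum_qBinom_mul_zpow_eq_prod {s z : K} (hs : s ≠ 0) (hz : z ≠ 0) (N : ℕ) :
    ∑ k ∈ Icc (-N : ℤ) N, qBinom (s ^ 2) (2 * N) (k + N).toNat * (s ^ (k ^ 2) * z ^ k) =
      ∏ j ∈ range N, (1 + z * s ^ (2 * j + 1)) * (1 + z⁻¹ * s ^ (2 * j + 1)) := by
  set x : K := z * s ^ (1 - 2 * N : ℤ) with hx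
  have hprod : s ^ (N ^ 2) * ∏ i ∈ range (2 * N), (1 + x * (s ^ 2) ^ i) =
      z ^ N * ∏ j ∈ range N, (1 + z * s ^ (2 * j + 1)) * (1 + z⁻¹ * s ^ (2 * j + 1)) := by
    rw [← pow_sq_mul_prod_one_add_mul_zpow hs hz]
    refine congrArg _ (prod_congr rfl fun i _ => ?_)
    rw [hx, mul_assoc, ← zpow_natCast, ← zpow_natCast, ← zpow_mul, ← zpow_add₀ hs]
    congr 3; push_cast; ring
  have hsum : s ^ (N ^ 2) *
        ∑ m ∈ range (2 * N + 1), (s ^ 2) ^ m.choose 2 * qBinom (s ^ 2) (2 * N) m * x ^ m =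
      z ^ N * ∑ k ∈ Icc (-N : ℤ) N,
        qBinom (s ^ 2) (2 * N) (k + N).toNat * (s ^ (k ^ 2) * z ^ k) := by
    rw [mul_sum, mul_sum]
    refine sum_nbij' (fun m : ℕ => (m : ℤ) - N) (fun k => (k + N).toNat) ?_ ?_ ?_ ?_ ?_
    · intro m hm; simp only [mem_range, mem_Icc] at hm ⊢; omega
    · intro k hk; simp only [mem_range, mem_Icc] at hk ⊢; omega
    · intro m _; simp
    · intro k hk; simp only [mem_Icc] at hk; omega
    · intro m _
      have hs_exp : s ^ (N ^ 2) * ((s ^ 2) ^ m.choose 2 * x ^ m) =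
          z ^ m * s ^ (((m : ℤ) - N) ^ 2) := by
        have e₁ : (s ^ 2) ^ m.choose 2 = s ^ ((2 * m.choose 2 : ℕ) : ℤ) := by
          rw [zpow_natCast, pow_mul]
        have e₂ : (s ^ (1 - 2 * N : ℤ)) ^ m = s ^ ((1 - 2 * N) * m : ℤ) := by
          rw [zpow_mul, zpow_natCast]
        rw [hx, mul_pow, e₁, e₂, ← zpow_natCast s (N ^ 2), mul_left_comm _ (z ^ m),
          mul_left_comm _ (z ^ m), ← zpow_add₀ hs, ← zpow_add₀ hs]
        congr 2
        push_cast
        linear_combination two_mul_cast_choose_two m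
      have hz_exp : z ^ N * z ^ ((m : ℤ) - N) = z ^ m := by
        rw [← zpow_natCast z N, ← zpow_add₀ hz, add_sub_cancel, zpow_natCast]
      simp only [sub_add_cancel, Int.toNat_natCast]
      linear_combination qBinom (s ^ 2) (2 * N) m * hs_exp -
        qBinom (s ^ 2) (2 * N) m * s ^ (((m : ℤ) - N) ^ 2) * hz_exp
  apply mul_left_cancel₀ (pow_ne_zero N hz)
  rw [← hsum, ← hprod, prod_one_add_mul_pow_eq_sum_qBinom]

end FiniteJacobi

section Products

variable {q : ℝ}

lemma multipliable_one_add_mul_pow (a : ℝ) (hq : |q| < 1) :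
    Multipliable fun n : ℕ => 1 + a * q ^ n :=
  Real.multipliable_one_add_of_summable
    ((summable_geometric_of_abs_lt_one hq).mul_left a)

lemma tprod_one_add_mul_pow_eq_even_mul_odd (a : ℝ) (hq : |q| < 1) :
    ∏' n : ℕ, (1 + a * q ^ n) =
      (∏' n : ℕ, (1 + a * (q ^ 2) ^ n)) * ∏' n : ℕ, (1 + a * q * (q ^ 2) ^ n) := by
  have hq2 : |q ^ 2| < 1 := by rw [abs_pow]; exact pow_lt_one₀ (abs_nonneg q) hq two_ne_zero
  have heven := (multipliable_one_add_mul_pow a hq2).hasProd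
  have hodd := (multipliable_one_add_mul_pow (a * q) hq2).hasProd
  simp only [← pow_mul] at heven hodd ⊢
  refine (heven.even_mul_odd ?_).tprod_eq
  simpa only [pow_succ', mul_assoc] using hodd

lemma tprod_one_add_mul_pow_mul_tprod_one_sub_mul_pow (a : ℝ) (hq : |q| < 1) :
    (∏' n : ℕ, (1 + a * q ^ n)) * ∏' n : ℕ, (1 - a * q ^ n) =
      ∏' n : ℕ, (1 - a ^ 2 * (q ^ 2) ^ n) := by
  have hsub := multipliable_one_add_mul_pow (-a) hq
  simp only [neg_mul, ← sub_eq_add_neg] at hsub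
  rw [← (multipliable_one_add_mul_pow a hq).tprod_mul hsub]
  exact tprod_congr fun n => by ring

end Products

section Limits

variable {q : ℝ}

lemma qBinom_nonneg {R : Type*} [CommRing R] [PartialOrder R] [IsOrderedRing R] {q : R}
    (hq : 0 ≤ q) (n m : ℕ) : 0 ≤ qBinom q n m := by
  induction n generalizing m with
  | zero => cases m <;> simp
  | succ n ih =>
    cases m with
    | zero => simp
    | succ m => rw [qBinom_succ_succ]; have := ih m; have := ih (m + 1); positivity

lemma qPochhammer_pos (hq0 : 0 ≤ q) (hq1 : q < 1) (n : ℕ) : 0 < qPochhammer q n :=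
  prod_pos fun i _ => sub_pos.2 (pow_lt_one₀ hq0 hq1 i.succ_ne_zero)

lemma qPochhammer_antitone (hq0 : 0 ≤ q) (hq1 : q < 1) : Antitone (qPochhammer q) :=
  antitone_nat_of_succ_le fun n => by
    rw [qPochhammer_succ]
    exact mul_le_of_le_one_right (qPochhammer_pos hq0 hq1 n).le
      (sub_le_self _ (pow_nonneg hq0 _))

lemma tendsto_qPochhammer (hq0 : 0 ≤ q) (hq1 : q < 1) :
    Tendsto (qPochhammer q) atTop (𝓝 (∏' n : ℕ, (1 - q ^ (n + 1)))) := by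
  have hq : |q| < 1 := by rwa [abs_of_nonneg hq0]
  have h := (multipliable_one_add_mul_pow (-q) hq).hasProd.tendsto_prod_nat
  simp only [neg_mul, ← sub_eq_add_neg, ← pow_succ'] at h
  exact h

lemma tprod_one_sub_pow_le_qPochhammer (hq0 : 0 ≤ q) (hq1 : q < 1) (n : ℕ) :
    ∏' n : ℕ, (1 - q ^ (n + 1)) ≤ qPochhammer q n :=
  (qPochhammer_antitone hq0 hq1).le_of_tendsto (tendsto_qPochhammer hq0 hq1) n

lemma tprod_one_sub_pow_pos (hq0 : 0 ≤ q) (hq1 : q < 1) :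
    0 < ∏' n : ℕ, (1 - q ^ (n + 1)) := by
  have hfactor (n : ℕ) : 0 < 1 - q ^ (n + 1) := sub_pos.2 (pow_lt_one₀ hq0 hq1 n.succ_ne_zero)
  refine (tprod_nonneg fun n => (hfactor n).le).lt_of_ne' ?_
  simp only [sub_eq_add_neg]
  refine tprod_one_add_ne_zero_of_summable (fun n => ?_) ?_
  · rw [← sub_eq_add_neg]; exact (hfactor n).ne'
  · simpa [norm_pow, abs_of_nonneg hq0] using
      (summable_nat_add_iff 1).mpr (summable_geometric_of_lt_one hq0 hq1)

lemma qBinom_add_eq_div (hq0 : 0 ≤ q) (hq1 : q < 1) (m k : ℕ) :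
    qBinom q (m + k) m = qPochhammer q (m + k) / (qPochhammer q m * qPochhammer q k) := by
  rw [← qBinom_mul_qPochhammer_mul_qPochhammer, mul_assoc, mul_div_cancel_right₀]
  exact (mul_pos (qPochhammer_pos hq0 hq1 m) (qPochhammer_pos hq0 hq1 k)).ne'

lemma qBinom_le_inv_tprod (hq0 : 0 ≤ q) (hq1 : q < 1) (n m : ℕ) :
    qBinom q n m ≤ (∏' n : ℕ, (1 - q ^ (n + 1)))⁻¹ := by
  have hP := tprod_one_sub_pow_pos hq0 hq1
  rcases le_or_gt m n with h | h
  · obtain ⟨k, rfl⟩ := Nat.exists_eq_add_of_le h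
    have hm := qPochhammer_pos hq0 hq1 m
    have hk := qPochhammer_pos hq0 hq1 k
    calc qBinom q (m + k) m = qPochhammer q (m + k) / (qPochhammer q m * qPochhammer q k) :=
          qBinom_add_eq_div hq0 hq1 m k
      _ ≤ qPochhammer q k / (qPochhammer q m * qPochhammer q k) := by
          gcongr; exact qPochhammer_antitone hq0 hq1 (Nat.le_add_left k m)
      _ = (qPochhammer q m)⁻¹ := by field_simp
      _ ≤ (∏' n : ℕ, (1 - q ^ (n + 1)))⁻¹ :=
          inv_anti₀ hP (tprod_one_sub_pow_le_qPochhammer hq0 hq1 m)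
  · rw [qBinom_eq_zero_of_lt q h]
    exact inv_nonneg.2 hP.le

lemma tendsto_qBinom_add (hq0 : 0 ≤ q) (hq1 : q < 1) {ι : Type*} {l : Filter ι}
    {a b : ι → ℕ} (ha : Tendsto a l atTop) (hb : Tendsto b l atTop) :
    Tendsto (fun i => qBinom q (a i + b i) (a i)) l
      (𝓝 (∏' n : ℕ, (1 - q ^ (n + 1)))⁻¹) := by
  have hP := tprod_one_sub_pow_pos hq0 hq1
  have hlim := tendsto_qPochhammer hq0 hq1
  have hab : Tendsto (fun i => a i + b i) l atTop :=
    tendsto_atTop_mono (fun i => Nat.le_add_right _ _) ha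
  have h := (hlim.comp hab).div ((hlim.comp ha).mul (hlim.comp hb)) (by positivity)
  rw [div_mul_cancel_left₀ hP.ne'] at h
  refine h.congr fun i => ?_
  simp only [Pi.div_apply, Function.comp_apply, qBinom_add_eq_div hq0 hq1]

end Limits

section Jacobi

variable {s : ℝ}

lemma summable_pow_sq_mul_pow (hs0 : 0 ≤ s) (hs1 : s < 1) (w : ℝ) :
    Summable fun n : ℕ => s ^ (n ^ 2) * w ^ n := by
  have hlim : Tendsto (fun n : ℕ => s ^ n * |w|) atTop (𝓝 0) := by
    simpa using (tendsto_pow_atTop_nhds_zero_of_lt_one hs0 hs1).mul_const |w|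
  refine Summable.of_norm_bounded_eventually_nat summable_geometric_two ?_
  filter_upwards [hlim.eventually (ge_mem_nhds (by norm_num : (0 : ℝ) < 1 / 2))] with n hn
  rw [norm_mul, norm_pow, norm_pow, Real.norm_of_nonneg hs0, Real.norm_eq_abs, sq, pow_mul,
    ← mul_pow]
  exact pow_le_pow_left₀ (by positivity) hn n

lemma summable_zpow_sq_mul_zpow (hs0 : 0 ≤ s) (hs1 : s < 1) (z : ℝ) :
    Summable fun k : ℤ => s ^ (k ^ 2) * z ^ k := by
  refine Summable.of_nat_of_neg ?_ ?_
  · simpa only [← Nat.cast_pow, zpow_natCast] using summable_pow_sq_mul_pow hs0 hs1 z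
  · simpa only [neg_sq, ← Nat.cast_pow, zpow_natCast, zpow_neg, inv_pow] using
      summable_pow_sq_mul_pow hs0 hs1 z⁻¹

lemma tendsto_qBinom_two_mul {q : ℝ} (hq0 : 0 ≤ q) (hq1 : q < 1) (k : ℤ) :
    Tendsto (fun N : ℕ => qBinom q (2 * N) (k + N).toNat) atTop
      (𝓝 (∏' n : ℕ, (1 - q ^ (n + 1)))⁻¹) := by
  have h := tendsto_qBinom_add hq0 hq1 (a := fun N : ℕ => (k + N).toNat)
    (b := fun N : ℕ => (N - k).toNat)
    (tendsto_atTop_atTop.2 fun b => ⟨b + k.natAbs, fun N hN => by omega⟩)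
    (tendsto_atTop_atTop.2 fun b => ⟨b + k.natAbs, fun N hN => by omega⟩)
  refine h.congr' ?_
  filter_upwards [eventually_ge_atTop k.natAbs] with N hN
  congr 1
  omega

theorem jacobi_triple_product (hs0 : 0 < s) (hs1 : s < 1) {z : ℝ} (hz : z ≠ 0) :
    ∑' k : ℤ, s ^ (k ^ 2) * z ^ k =
      ∏' n : ℕ, (1 - s ^ (2 * n + 2)) *
        ((1 + z * s ^ (2 * n + 1)) * (1 + z⁻¹ * s ^ (2 * n + 1))) := by
  have hq0 : 0 ≤ s ^ 2 := sq_nonneg s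
  have hq1 : s ^ 2 < 1 := pow_lt_one₀ hs0.le hs1 two_ne_zero
  have hq : |s ^ 2| < 1 := by rwa [abs_of_nonneg hq0]
  set P := ∏' n : ℕ, (1 - (s ^ 2) ^ (n + 1)) with hP_def
  have hP : 0 < P := tprod_one_sub_pow_pos hq0 hq1
  have hodd (w : ℝ) : Multipliable fun n : ℕ => 1 + w * s ^ (2 * n + 1) := by
    simpa only [mul_assoc, pow_succ, pow_mul, mul_comm s] using
      multipliable_one_add_mul_pow (w * s) hq
  set term : ℤ → ℝ := fun k => s ^ (k ^ 2) * z ^ k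
  set F : ℕ → ℤ → ℝ := fun N => Set.indicator ↑(Icc (-N : ℤ) N)
    fun k => qBinom (s ^ 2) (2 * N) (k + N).toNat * term k
  have hF (N : ℕ) : ∑' k, F N k =
      ∏ j ∈ range N, (1 + z * s ^ (2 * j + 1)) * (1 + z⁻¹ * s ^ (2 * j + 1)) := by
    rw [← sum_eq_tsum_indicator, sum_qBinom_mul_zpow_eq_prod hs0.ne' hz]
  have hlim : Tendsto (fun N => ∑' k, F N k) atTop (𝓝 (∑' k, P⁻¹ * term k)) := by
    refine tendsto_tsum_of_dominated_convergence (bound := fun k => P⁻¹ * ‖term k‖)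
      ((summable_zpow_sq_mul_zpow hs0.le hs1 z).norm.mul_left _) (fun k => ?_) ?_
    · refine ((tendsto_qBinom_two_mul hq0 hq1 k).mul_const (term k)).congr' ?_
      filter_upwards [eventually_ge_atTop k.natAbs] with N hN
      have hk : k ∈ (Icc (-N : ℤ) N : Set ℤ) := by rw [mem_coe, mem_Icc]; omega
      exact (Set.indicator_of_mem hk
        (fun k => qBinom (s ^ 2) (2 * N) (k + N).toNat * term k)).symm
    · refine Eventually.of_forall fun N k => (norm_indicator_le_norm_self _ _).trans ?_
      rw [norm_mul, Real.norm_of_nonneg (qBinom_nonneg hq0 _ _)]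
      exact mul_le_mul_of_nonneg_right (qBinom_le_inv_tprod hq0 hq1 _ _) (norm_nonneg _)
  have hprod := ((hodd z).mul (hodd z⁻¹)).hasProd.tendsto_prod_nat
  rw [← (funext hF : (fun N => ∑' k, F N k) = _)] at hprod
  have hlimit := tendsto_nhds_unique hlim hprod
  rw [tsum_mul_left, inv_mul_eq_iff_eq_mul₀ hP.ne'] at hlimit
  have hPmul : Multipliable fun n : ℕ => 1 - s ^ (2 * n + 2) := by
    refine (multipliable_one_add_mul_pow (-(s ^ 2)) hq).congr fun n => ?_
    ring
  rw [hPmul.tprod_mul ((hodd z).mul (hodd z⁻¹)), hlimit, hP_def]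
  congr 1
  exact tprod_congr fun n => by rw [← pow_mul]; ring_nf

end Jacobi

lemma tsum_zpow_two_mul_sq_sub_self {t : ℝ} (ht0 : t ≠ 0) (ht1 : |t| < 1) :
    ∑' n : ℤ, t ^ (2 * n ^ 2 - n) =
      (∏' n : ℕ, (1 + t * t ^ n)) ^ 2 * ∏' n : ℕ, (1 - t * t ^ n) := by
  have habs (k : ℕ) (hk : k ≠ 0) : |t ^ k| < 1 := by
    rw [abs_pow]; exact pow_lt_one₀ (abs_nonneg t) ht1 hk
  have hJ := jacobi_triple_product (sq_pos_iff.2 ht0) (abs_lt.1 (habs 2 two_ne_zero)).2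
    (inv_ne_zero ht0)
  have hterm (n : ℤ) : (t ^ 2) ^ (n ^ 2) * t⁻¹ ^ n = t ^ (2 * n ^ 2 - n) := by
    rw [← zpow_natCast t 2, ← zpow_mul, inv_zpow', ← zpow_add₀ ht0]
    ring_nf
  have hfactor (n : ℕ) : (1 - (t ^ 2) ^ (2 * n + 2)) *
      ((1 + t⁻¹ * (t ^ 2) ^ (2 * n + 1)) * (1 + t⁻¹⁻¹ * (t ^ 2) ^ (2 * n + 1))) =
      (1 - t ^ 4 * (t ^ 4) ^ n) * ((1 + t * (t ^ 4) ^ n) * (1 + t ^ 3 * (t ^ 4) ^ n)) := by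
    field_simp
    ring
  have hD := multipliable_one_add_mul_pow (-(t ^ 4)) (habs 4 (by norm_num))
  simp only [neg_mul, ← sub_eq_add_neg] at hD
  have hE₁ := multipliable_one_add_mul_pow t (habs 4 (by norm_num))
  have hE₃ := multipliable_one_add_mul_pow (t ^ 3) (habs 4 (by norm_num))
  have hA := tprod_one_add_mul_pow_eq_even_mul_odd t ht1
  have hO := tprod_one_add_mul_pow_eq_even_mul_odd t (habs 2 two_ne_zero)
  have hB := tprod_one_add_mul_pow_mul_tprod_one_sub_mul_pow t ht1
  have hC := tprod_one_add_mul_pow_mul_tprod_one_sub_mul_pow (t ^ 2) (habs 2 two_ne_zero)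
  rw [← pow_two] at hA
  rw [← pow_mul, ← pow_succ'] at hO
  rw [← pow_mul] at hC
  calc ∑' n : ℤ, t ^ (2 * n ^ 2 - n)
      = ∏' n : ℕ, (1 - t ^ 4 * (t ^ 4) ^ n) *
          ((1 + t * (t ^ 4) ^ n) * (1 + t ^ 3 * (t ^ 4) ^ n)) := by
        simp only [← hterm, hJ, hfactor]
    _ = (∏' n : ℕ, (1 - t ^ 4 * (t ^ 4) ^ n)) *
          ((∏' n : ℕ, (1 + t * (t ^ 4) ^ n)) * ∏' n : ℕ, (1 + t ^ 3 * (t ^ 4) ^ n)) := by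
        rw [hD.tprod_mul (hE₁.mul hE₃), hE₁.tprod_mul hE₃]
    _ = (∏' n : ℕ, (1 + t * t ^ n)) ^ 2 * ∏' n : ℕ, (1 - t * t ^ n) := by
        rw [← hC, ← hB, ← hO, hA]
        ring

lemma tsum_subtype_dvd {M : Type*} [AddCommMonoid M] [TopologicalSpace M] {d : ℤ} (hd : d ≠ 0)
    (f : ℤ → M) : ∑' k : {k : ℤ // d ∣ k}, f k = ∑' n : ℤ, f (d * n) := by
  let e : ℤ ≃ {k : ℤ // d ∣ k} :=
    Equiv.ofBijective (fun n => ⟨d * n, dvd_mul_right d n⟩)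
      ⟨fun _ _ h => mul_left_cancel₀ hd (congrArg Subtype.val h),
        fun ⟨_, n, hn⟩ => ⟨n, Subtype.ext hn.symm⟩⟩
  exact (e.tsum_eq (fun k => f k)).symm

/-- The graded dimension of the vacuum module of the `A1`, `ℓ = 4` lattice vertex algebra
equals the Neveu–Schwarz symplectic fermion character:
`Σ_{k ∈ 4ℤ} t^{(k−1)²/8 − 1/8} / ∏_{m≥1}(1−t^m) = ∏_{m≥1}(1+t^m)²`,
here stated for real `0 < t < 1` (fractional powers via `rpow`). -/
theorem stmt_14 (t : ℝ) (h0 : 0 < t) (h1 : t < 1) :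
    (∑' k : {k : ℤ // (4 : ℤ) ∣ k}, t ^ ((((k : ℤ) : ℝ) - 1) ^ 2 / 8 - 1/8))
        / ∏' m : ℕ, (1 - t ^ (m + 1))
      = ∏' m : ℕ, (1 + t ^ (m + 1)) ^ 2 := by
  have ht1 : |t| < 1 := by rwa [abs_of_pos h0]
  have hexp (n : ℤ) :
      t ^ ((((4 * n : ℤ) : ℝ) - 1) ^ 2 / 8 - 1 / 8) = t ^ (2 * n ^ 2 - n) := by
    rw [← Real.rpow_intCast]; congr 1; push_cast; ring
  rw [div_eq_iff (tprod_one_sub_pow_pos h0.le h1).ne',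
    tsum_subtype_dvd four_ne_zero fun k : ℤ => t ^ (((k : ℝ) - 1) ^ 2 / 8 - 1 / 8),
    tsum_congr hexp, tsum_zpow_two_mul_sq_sub_self h0.ne' ht1,
    ← (multipliable_one_add_mul_pow t ht1).tprod_pow]
  simp only [← pow_succ']
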